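/- arXiv:0807.3690 — 2 statements merged into one kernel-verified Lean document; each statement's English description precedes it below -/
import Mathlib

section
/- Define φ_T(M₁, M₂, n) := ∑_{d} μ'(d) · ⌊((M₁ mod d) + (M₂ mod d))/d⌋, where the sum runs over squarefree products d > 1 of primes all ≤ n, and μ'(d) = (-1)^{ω(d)+1} (so singleton prime products count positively, pairs negatively, etc.). Then for every natural number n ≥ 1, π((n+1)²) - π(n²) = π(2n) - π(n) + 1 - φ_T(n², 2n, n), where π is the prime-counting function. -/
/-!
Let `L(x)` count the `m ≤ x` coprime to the primorial `n#`, i.e. with no prime factor `≤ n`.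
Möbius inversion gives `L(x) = ∑_{d ∣ n#} μ(d) ⌊x / d⌋`. Summing
`⌊(a + b) / d⌋ = ⌊a / d⌋ + ⌊b / d⌋ + ⌊(a mod d + b mod d) / d⌋` against `μ(d)` over `d ∣ n#`
(the last term vanishes at `d = 1`) yields `φ_T(M₁, M₂, n) = L(M₁) + L(M₂) - L(M₁ + M₂)`.
For `n ≤ x < (n + 1)²` the numbers counted by `L(x)` are `1` and the primes in `(n, x]`, so
`L(x) = 1 + π(x) - π(n)`. Apply this at `x = n², 2n, n² + 2n` and use that `(n + 1)²` is not prime.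
-/

open ArithmeticFunction Nat Finset
open scoped ArithmeticFunction.Moebius Nat.Prime

/-- Index set: squarefree `d > 1` all of whose prime factors are `≤ n`. -/
def sqfSet (n : ℕ) : Finset ℕ :=
  (Finset.range (primorial n + 1)).filter
    (fun d => 1 < d ∧ Squarefree d ∧ ∀ p ∈ d.primeFactors, p ≤ n)

/-- The transformed Legendre function `φ_T`. -/
def phiT (M₁ M₂ n : ℕ) : ℤ :=
  -∑ d ∈ sqfSet n, ArithmeticFunction.moebius d * (((M₁ % d + M₂ % d) / d : ℕ) : ℤ)

lemma dvd_primorial_iff {n d : ℕ} :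
    d ∣ primorial n ↔ Squarefree d ∧ ∀ p ∈ d.primeFactors, p ≤ n := by
  refine ⟨fun h => ⟨(squarefree_primorial n).squarefree_of_dvd h, fun p hp => ?_⟩,
    fun ⟨hsq, hle⟩ => ?_⟩
  · exact (prime_of_mem_primeFactors hp).dvd_primorial_iff.mp
      ((dvd_of_mem_primeFactors hp).trans h)
  · rw [← prod_primeFactors_of_squarefree hsq, prod_primeFactors_dvd_iff (primorial_ne_zero n),
      primeFactors_primorial]
    exact fun p hp => mem_primesLE.mpr ⟨hle p hp, prime_of_mem_primeFactors hp⟩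

lemma sqfSet_eq_erase_divisors (n : ℕ) : sqfSet n = (primorial n).divisors.erase 1 := by
  ext d
  simp only [sqfSet, mem_filter, mem_range, mem_erase, mem_divisors, Nat.lt_succ_iff]
  constructor
  · rintro ⟨-, h1, hsq, hle⟩
    exact ⟨by omega, dvd_primorial_iff.mpr ⟨hsq, hle⟩, primorial_ne_zero n⟩
  · rintro ⟨h1, hdvd, -⟩
    have hd₀ : d ≠ 0 := ne_zero_of_dvd_ne_zero (primorial_ne_zero n) hdvd
    exact ⟨le_of_dvd (primorial_pos n) hdvd, one_lt_iff_ne_zero_and_ne_one.mpr ⟨hd₀, h1⟩,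
      dvd_primorial_iff.mp hdvd⟩

lemma sum_moebius_divisors (k : ℕ) :
    ∑ d ∈ k.divisors, (μ d : ℤ) = if k = 1 then 1 else 0 := by
  rw [← coe_mul_zeta_apply, moebius_mul_coe_zeta, one_apply]

lemma sum_moebius_mul_div_eq_card_coprime {N : ℕ} (hN : N ≠ 0) (x : ℕ) :
    ∑ d ∈ N.divisors, (μ d : ℤ) * (x / d : ℕ) = #{m ∈ Ioc 0 x | Coprime m N} := by
  calc ∑ d ∈ N.divisors, (μ d : ℤ) * (x / d : ℕ)
      = ∑ d ∈ N.divisors, ∑ m ∈ Ioc 0 x, if d ∣ m then (μ d : ℤ) else 0 := by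
        refine sum_congr rfl fun d _ => ?_
        rw [← sum_filter, sum_const, ← Ioc_filter_dvd_card_eq_div, nsmul_eq_mul, mul_comm]
    _ = ∑ m ∈ Ioc 0 x, ∑ d ∈ (Nat.gcd m N).divisors, (μ d : ℤ) := by
        rw [sum_comm]
        refine sum_congr rfl fun m _ => ?_
        rw [← sum_filter]
        congr 1
        ext e
        simp only [mem_filter, mem_divisors, Nat.dvd_gcd_iff, ne_eq, Nat.gcd_eq_zero_iff, hN,
          and_false, not_false_eq_true, and_true]
        tauto
    _ = #{m ∈ Ioc 0 x | Coprime m N} := by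
        simp only [sum_moebius_divisors, card_filter, Nat.cast_sum, Nat.cast_ite, Nat.cast_one,
          Nat.cast_zero, Coprime]

def legendrePhi (x n : ℕ) : ℕ := #{m ∈ Ioc 0 x | Coprime m (primorial n)}

lemma div_add_div_add_mod_div {d : ℕ} (hd : 0 < d) (a b : ℕ) :
    (a + b) / d = a / d + b / d + (a % d + b % d) / d := by
  have h : a + b = a % d + b % d + d * (a / d + b / d) := by
    rw [Nat.mul_add]; have := div_add_mod a d; have := div_add_mod b d; omega
  rw [h, add_mul_div_left _ _ hd]
  omega

lemma phiT_eq_legendrePhi (M₁ M₂ n : ℕ) :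
    phiT M₁ M₂ n = legendrePhi M₁ n + legendrePhi M₂ n - legendrePhi (M₁ + M₂) n := by
  simp only [legendrePhi, ← sum_moebius_mul_div_eq_card_coprime (primorial_ne_zero n)]
  rw [phiT, sqfSet_eq_erase_divisors, sum_erase _ (by simp), ← sum_add_distrib,
    ← sum_sub_distrib, ← sum_neg_distrib]
  refine sum_congr rfl fun d hd => ?_
  rw [div_add_div_add_mod_div (pos_of_mem_divisors hd) M₁ M₂]
  simp only [Nat.cast_add]
  ring

lemma coprime_primorial_iff {m n : ℕ} :
    Coprime m (primorial n) ↔ ∀ p, p.Prime → p ∣ m → n < p := by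
  rw [← not_iff_not, Prime.not_coprime_iff_dvd]
  push Not
  exact exists_congr fun p => and_congr_right fun hp => and_congr_right fun _ =>
    hp.dvd_primorial_iff

lemma filter_coprime_primorial_eq {n x : ℕ} (hx₀ : 0 < x) (hx : x < (n + 1) ^ 2) :
    {m ∈ Ioc 0 x | Coprime m (primorial n)} = insert 1 (primesLE x \ primesLE n) := by
  ext m
  simp only [mem_filter, mem_Ioc, mem_insert, mem_sdiff, mem_primesLE, coprime_primorial_iff]
  constructor
  · rintro ⟨⟨hm0, hmx⟩, hcop⟩
    rcases (show m = 1 ∨ 1 < m by omega) with rfl | hm1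
    · exact Or.inl rfl
    have hmin : n < m.minFac := hcop _ (minFac_prime (by omega)) (minFac_dvd m)
    have hmp : m.Prime := by
      by_contra hnp
      have : (n + 1) ^ 2 ≤ m :=
        (Nat.pow_le_pow_left hmin 2).trans (minFac_sq_le_self (by omega) hnp)
      omega
    have := hmp.minFac_eq
    exact Or.inr ⟨⟨hmx, hmp⟩, by omega⟩
  · rintro (rfl | ⟨⟨hmx, hmp⟩, hmn⟩)
    · exact ⟨⟨one_pos, hx₀⟩, fun p hp hp1 => absurd (le_of_dvd one_pos hp1) hp.one_lt.not_ge⟩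
    · refine ⟨⟨hmp.pos, hmx⟩, fun p hp hpm => ?_⟩
      rw [(prime_dvd_prime_iff_eq hp hmp).mp hpm]
      by_contra h
      exact hmn ⟨not_lt.mp h, hmp⟩

lemma legendrePhi_eq {n x : ℕ} (hx₀ : 0 < x) (hnx : n ≤ x) (hx : x < (n + 1) ^ 2) :
    (legendrePhi x n : ℤ) = 1 + π x - π n := by
  rw [legendrePhi, filter_coprime_primorial_eq hx₀ hx,
    card_insert_of_notMem (by simp [mem_primesLE, not_prime_one]),
    card_sdiff_of_subset (primesLE_mono hnx), primesLE_card_eq_primeCounting,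
    primesLE_card_eq_primeCounting, Nat.cast_add, Nat.cast_sub (monotone_primeCounting hnx)]
  ring

lemma primeCounting_add_one_of_not_prime {k : ℕ} (hk : ¬ (k + 1).Prime) : π (k + 1) = π k := by
  rw [← primesLE_card_eq_primeCounting, primesLE_succ, if_neg hk, primesLE_card_eq_primeCounting]

theorem stmt_3 (n : ℕ) (hn : 1 ≤ n) :
    (Nat.primeCounting ((n + 1) ^ 2) : ℤ) - Nat.primeCounting (n ^ 2) =
      (Nat.primeCounting (2 * n) : ℤ) - Nat.primeCounting n + 1 -
        phiT (n ^ 2) (2 * n) n := by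
  have h₁ := legendrePhi_eq (pow_pos hn 2) (le_self_pow two_ne_zero n) (by nlinarith)
  have h₂ := legendrePhi_eq (n := n) (x := 2 * n) (by omega) (by omega) (by nlinarith)
  have h₃ := legendrePhi_eq (n := n) (x := n ^ 2 + 2 * n) (by positivity) (by nlinarith)
    (by nlinarith)
  have hsq : (n + 1) ^ 2 = n ^ 2 + 2 * n + 1 := by ring
  have hπ := primeCounting_add_one_of_not_prime (hsq ▸ Prime.not_prime_pow le_rfl)
  rw [phiT_eq_legendrePhi, h₁, h₂, h₃, hsq, hπ]
  ring
end

section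
/- π(2n) - π(n) → ∞ as n → ∞, where π is the prime-counting function. -/
/-!
Erdős's proof of Bertrand's postulate, counting the primes in `(n, 2n]` instead of excluding them.
We have `4ⁿ < n · C(2n, n)`. Every prime power dividing `C(2n, n)` is at most `2n`, the primes
in `(2n/3, n]` do not divide it, and the primes in `(√(2n), 2n/3]` divide it at most once, so
their product is at most the primorial `4^(2n/3)`. Hence
`4ⁿ < n · (2n)^(√(2n) + π(2n) - π(n)) · 4^(2n/3)`, and as `(√(2n) + k) log(2n) = o(n)`,
`π(2n) - π(n)` eventually exceeds every `k`.
-/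

open Filter Finset Asymptotics
open scoped Nat.Prime

theorem isLittleO_sqrt_add_const_mul_log (c : ℝ) :
    (fun x => (√x + c) * Real.log x) =o[atTop] id := by
  simp only [add_mul]
  refine IsLittleO.add ?_ (Real.isLittleO_log_id_atTop.const_mul_left c)
  have h := (isBigO_refl Real.sqrt atTop).mul_isLittleO
    (isLittleO_log_rpow_atTop one_half_pos)
  simp only [← Real.sqrt_eq_rpow] at h
  exact h.congr' .rfl <| (eventually_ge_atTop 0).mono fun x hx => Real.mul_self_sqrt hx

namespace Nat

theorem card_filter_prime_Ioc {m n : ℕ} (h : m ≤ n) :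
    #{p ∈ Ioc m n | p.Prime} = π n - π m := by
  rw [← primesLE_card_eq_primeCounting, ← primesLE_card_eq_primeCounting,
    ← card_sdiff_of_subset (primesLE_mono h)]
  congr 1
  ext p
  simp only [mem_filter, mem_Ioc, Finset.mem_sdiff, mem_primesLE]
  grind

theorem centralBinom_eq_prod_mul_prod {n : ℕ} (hn : 2 < n) :
    centralBinom n = (∏ p ∈ range (2 * n / 3 + 1), p ^ (centralBinom n).factorization p) *
      ∏ p ∈ Ioc n (2 * n) with p.Prime, p ^ (centralBinom n).factorization p := by
  have hdisj : Disjoint (range (2 * n / 3 + 1)) {p ∈ Ioc n (2 * n) | p.Prime} :=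
    disjoint_left.2 fun p hp hp' => by
      simp only [mem_range, mem_filter, mem_Ioc] at hp hp'
      omega
  rw [← prod_union hdisj]
  conv_lhs => rw [← prod_pow_factorization_centralBinom n]
  refine (prod_subset (fun p hp => ?_) fun p hp hp' => ?_).symm
  · simp only [mem_union, mem_range, mem_filter, mem_Ioc] at hp ⊢
    omega
  · simp only [mem_union, mem_range, mem_filter, mem_Ioc, not_or, not_and] at hp hp'
    by_cases hpp : p.Prime
    · rw [factorization_centralBinom_of_two_mul_self_lt_three_mul hn (by grind) (by omega),
        pow_zero]
    · rw [factorization_eq_zero_of_not_prime _ hpp, pow_zero]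

theorem prod_range_pow_factorization_centralBinom_le {n : ℕ} (hn : 0 < n) :
    ∏ p ∈ range (2 * n / 3 + 1), p ^ (centralBinom n).factorization p ≤
      (2 * n) ^ sqrt (2 * n) * 4 ^ (2 * n / 3) := by
  set f := fun p => p ^ (centralBinom n).factorization p
  set s := {p ∈ range (2 * n / 3 + 1) | p.Prime}
  have hs : ∏ p ∈ s, f p = ∏ p ∈ range (2 * n / 3 + 1), f p :=
    prod_filter_of_ne fun p _ h => by
      contrapose! h
      simp [f, factorization_eq_zero_of_not_prime _ h]
  rw [← hs, ← prod_filter_mul_prod_filter_not s (· ≤ sqrt (2 * n))]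
  gcongr
  · calc ∏ p ∈ s with p ≤ sqrt (2 * n), f p ≤ ∏ p ∈ s with p ≤ sqrt (2 * n), 2 * n :=
          prod_le_prod' fun p _ => pow_factorization_choose_le (by omega)
      _ = (2 * n) ^ #{p ∈ s | p ≤ sqrt (2 * n)} := prod_const _
      _ ≤ (2 * n) ^ #(Ioc 0 (sqrt (2 * n))) := by
          refine pow_right_mono₀ (by omega) (card_le_card fun p hp => ?_)
          simp only [s, mem_filter, mem_Ioc] at hp ⊢
          exact ⟨hp.1.2.pos, hp.2⟩
      _ = (2 * n) ^ sqrt (2 * n) := by rw [card_Ioc, Nat.sub_zero]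
  · calc ∏ p ∈ s with ¬p ≤ sqrt (2 * n), f p ≤ ∏ p ∈ s with ¬p ≤ sqrt (2 * n), p :=
          prod_le_prod' fun p hp => by
            simp only [s, mem_filter, not_le] at hp
            calc f p ≤ p ^ 1 := pow_le_pow_right₀ hp.1.2.one_lt.le
                  (factorization_choose_le_one (sqrt_lt'.1 hp.2))
              _ = p := pow_one p
      _ ≤ primorial (2 * n / 3) :=
          prod_le_prod_of_subset_of_one_le' (filter_subset _ _)
            fun p hp _ => (mem_filter.1 hp).2.one_lt.le
      _ ≤ 4 ^ (2 * n / 3) := primorial_le_four_pow _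

theorem prod_Ioc_pow_factorization_centralBinom_le (n : ℕ) :
    ∏ p ∈ Ioc n (2 * n) with p.Prime, p ^ (centralBinom n).factorization p ≤
      (2 * n) ^ (π (2 * n) - π n) := by
  rw [← card_filter_prime_Ioc (by omega), ← prod_const]
  refine prod_le_prod' fun p hp => pow_factorization_choose_le ?_
  simp only [mem_filter, mem_Ioc] at hp
  omega

theorem four_pow_lt_mul_pow_mul_four_pow {n : ℕ} (hn : 4 ≤ n) :
    4 ^ n < n * (2 * n) ^ (sqrt (2 * n) + (π (2 * n) - π n)) * 4 ^ (2 * n / 3) := calc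
  4 ^ n < n * centralBinom n := four_pow_lt_mul_centralBinom n hn
  _ ≤ n * ((2 * n) ^ sqrt (2 * n) * 4 ^ (2 * n / 3) * (2 * n) ^ (π (2 * n) - π n)) := by
    rw [centralBinom_eq_prod_mul_prod (by omega)]
    gcongr
    · exact prod_range_pow_factorization_centralBinom_le (by omega)
    · exact prod_Ioc_pow_factorization_centralBinom_le n
  _ = _ := by ring

theorem eventually_mul_pow_mul_four_pow_le (k : ℕ) :
    ∀ᶠ n : ℕ in atTop, n * (2 * n) ^ (sqrt (2 * n) + k) * 4 ^ (2 * n / 3) ≤ 4 ^ n := by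
  have h2n : Tendsto (fun n : ℕ => 2 * (n : ℝ)) atTop atTop :=
    tendsto_natCast_atTop_atTop.const_mul_atTop two_pos
  have hε : 0 < Real.log 4 / 6 := by positivity
  filter_upwards [h2n.eventually ((isLittleO_sqrt_add_const_mul_log (k + 1)).bound hε),
    eventually_ge_atTop 1] with n hlog hn
  have hn' : (1 : ℝ) ≤ n := mod_cast hn
  replace hlog := (Real.le_norm_self _).trans hlog
  rw [id, Real.norm_of_nonneg (by positivity)] at hlog
  rw [← Nat.cast_le (α := ℝ), ← Real.log_le_log_iff (by positivity) (by positivity)]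
  push_cast
  rw [Real.log_mul (by positivity) (by positivity), Real.log_mul (by positivity) (by positivity),
    Real.log_pow, Real.log_pow, Real.log_pow]
  push_cast
  have hL : 0 ≤ Real.log (2 * n) := Real.log_nonneg (by linarith)
  have hlog_le : Real.log n ≤ Real.log (2 * n) := Real.log_le_log (by positivity) (by linarith)
  have hsqrt : (sqrt (2 * n) : ℝ) * Real.log (2 * n) ≤ √(2 * n) * Real.log (2 * n) :=
    mul_le_mul_of_nonneg_right (mod_cast Real.nat_sqrt_le_real_sqrt) hL
  have hdiv : ((2 * n / 3 : ℕ) : ℝ) * Real.log 4 ≤ 2 * n / 3 * Real.log 4 :=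
    mul_le_mul_of_nonneg_right (by exact_mod_cast Nat.cast_div_le) (by positivity)
  linarith

end Nat

theorem stmt_16 :
    Filter.Tendsto (fun n : ℕ => Nat.primeCounting (2 * n) - Nat.primeCounting n)
      Filter.atTop Filter.atTop := by
  refine tendsto_atTop.2 fun k => ?_
  filter_upwards [Nat.eventually_mul_pow_mul_four_pow_le k, eventually_ge_atTop 4] with n hle hn
  by_contra! hlt
  refine (Nat.four_pow_lt_mul_pow_mul_four_pow hn).not_ge (le_trans ?_ hle)
  gcongr
  omega
end
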